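/- Let X be a closed connected n-dimensional manifold, P' ⊆ P open polydisks (products of open disks) in ℝ^{2n} with closure of P' contained in P, and ι : P → X a smooth embedding. Then ι(P') is solid: both ι(P') and X \ ι(P') are connected. -/

import Mathlib

/-!
The image `ι(P')` is connected as a continuous image of a convex set. For the complement we
use a general fact: in a connected space, if `U` is open and `closure U ⊆ U ∪ A` for a
preconnected `A` disjoint from `U`, then `Uᶜ` is preconnected, since a separation of `Uᶜ`
puts `A` on one side and the other side is then clopen in the whole space. Here
`U = ι(P')` and `A = ι(P \ P')`: the closure of `U` lies in the compact, hence closed, set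
`ι(cl P')`. Finally `P \ P'` is the union over `j` of the products of disks with an annulus in
the `j`-th factor, all of which contain the point with coordinates `√(a' j)`.
-/

open Topology Set Metric Function

theorem IsOpen.isPreconnected_compl_of_closure_subset_union {X : Type*} [TopologicalSpace X]
    [PreconnectedSpace X] {U A : Set X} (hU : IsOpen U) (hA : IsPreconnected A) (hAU : A ⊆ Uᶜ)
    (hcl : closure U ⊆ U ∪ A) : IsPreconnected Uᶜ := by
  rw [isPreconnected_iff_subset_of_fully_disjoint_closed hU.isClosed_compl]
  intro u v hu hv huv hdisj
  wlog hAu : A ⊆ u generalizing u v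
  · have hAv : A ⊆ v :=
      (isPreconnected_iff_subset_of_disjoint_closed.1 hA u v hu hv (hAU.trans huv)
        (by rw [hdisj.inter_eq, inter_empty])).resolve_left hAu
    exact (this v u hv hu (union_comm u v ▸ huv) hdisj.symm hAv).symm
  have hcompl : (v ∩ Uᶜ)ᶜ = U ∪ u := by
    ext x
    by_cases hx : x ∈ U
    · simp [hx]
    · rcases huv hx with hxu | hxv
      · simp [hx, hxu, hdisj.notMem_of_mem_left hxu]
      · simp [hx, hxv, hdisj.notMem_of_mem_right hxv]
  have hclosed : IsClosed (U ∪ u) := by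
    refine isClosed_of_closure_subset ?_
    rw [closure_union, hu.closure_eq]
    exact union_subset (hcl.trans (union_subset_union_right U hAu)) subset_union_right
  have hclopen : IsClopen (v ∩ Uᶜ) :=
    ⟨hv.inter hU.isClosed_compl, by rw [← isClosed_compl_iff, hcompl]; exact hclosed⟩
  rcases isClopen_iff.1 hclopen with h | h
  · exact Or.inl fun x hx => (huv hx).resolve_right fun hxv => h.subset ⟨hxv, hx⟩
  · exact Or.inr fun x _ => (h.symm.subset (mem_univ x)).1

theorem Set.univ_pi_sdiff_univ_pi {J : Type*} {α : J → Type*} [DecidableEq J]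
    (s t : ∀ j, Set (α j)) :
    univ.pi s \ univ.pi t = ⋃ j, univ.pi (update s j (s j \ t j)) := by
  ext z
  simp only [mem_sdiff, mem_univ_pi, mem_iUnion, not_forall]
  constructor
  · rintro ⟨hs, j, hj⟩
    exact ⟨j, (forall_update_iff s fun k u => z k ∈ u).2
      ⟨⟨hs j, hj⟩, fun k _ => hs k⟩⟩
  · rintro ⟨j, hj⟩
    obtain ⟨⟨hsj, htj⟩, hs⟩ := (forall_update_iff s fun k u => z k ∈ u).1 hj
    exact ⟨fun k => if h : k = j then h ▸ hsj else hs k h, j, htj⟩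

section Annulus

variable {E : Type*} [NormedAddCommGroup E] [NormedSpace ℝ E]

theorem isPreconnected_ball_sdiff_ball (hE : 1 < Module.rank ℝ E) {r R : ℝ} (hr : 0 < r) :
    IsPreconnected (ball (0 : E) R \ ball 0 r) := by
  have hpolar :
      (fun p : ℝ × E => p.1 • p.2) '' Ico r R ×ˢ sphere 0 1 = ball 0 R \ ball 0 r := by
    ext w
    simp only [mem_image, mem_prod, mem_Ico, mem_sphere_zero_iff_norm, Prod.exists, mem_sdiff,
      mem_ball_zero_iff, not_lt]
    constructor
    · rintro ⟨t, e, ⟨⟨hrt, htR⟩, he⟩, rfl⟩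
      rw [norm_smul, he, mul_one, Real.norm_of_nonneg (hr.le.trans hrt)]
      exact ⟨htR, hrt⟩
    · rintro ⟨hwR, hrw⟩
      have hw : ‖w‖ ≠ 0 := (hr.trans_le hrw).ne'
      refine ⟨‖w‖, ‖w‖⁻¹ • w, ⟨⟨hrw, hwR⟩, ?_⟩, ?_⟩
      · rw [norm_smul, norm_inv, norm_norm, inv_mul_cancel₀ hw]
      · rw [smul_smul, mul_inv_cancel₀ hw, one_smul]
  rw [← hpolar]
  exact (isPreconnected_Ico.prod (isPreconnected_sphere hE 0 1)).image _
    (continuous_fst.smul continuous_snd).continuousOn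

theorem isPreconnected_univ_pi_ball_sdiff {J : Type*} (hE : 1 < Module.rank ℝ E)
    {ρ ρ' : J → ℝ} (hρ' : ∀ j, 0 < ρ' j) (hρ'ρ : ∀ j, ρ' j < ρ j) :
    IsPreconnected (univ.pi (fun j => ball (0 : E) (ρ j)) \ univ.pi fun j => ball 0 (ρ' j)) := by
  classical
  obtain ⟨e, he⟩ := (isConnected_sphere hE (0 : E) zero_le_one).nonempty
  rw [mem_sphere_zero_iff_norm] at he
  have hnorm : ∀ k, ‖ρ' k • e‖ = ρ' k := fun k => by
    rw [norm_smul, he, mul_one, Real.norm_of_nonneg (hρ' k).le]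
  rw [univ_pi_sdiff_univ_pi]
  refine isPreconnected_iUnion ⟨fun k => ρ' k • e, mem_iInter.2 fun j => ?_⟩ fun j =>
    isPreconnected_univ_pi fun k => ?_
  · refine mem_univ_pi.2 <|
      (forall_update_iff _ fun k (u : Set E) => ρ' k • e ∈ u).2 ⟨?_, fun k _ => ?_⟩
    · simp [hnorm, hρ'ρ j]
    · simp [hnorm, hρ'ρ k]
  · rcases eq_or_ne k j with rfl | hkj
    · rw [update_self]
      exact isPreconnected_ball_sdiff_ball hE (hρ' k)
    · rw [update_of_ne hkj]
      exact (convex_ball _ _).isPreconnected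

end Annulus

section Polydisk

variable {J : Type*}

def polydisk (a : J → ℝ) : Set (J → ℂ) := {z | ∀ j, ‖z j‖ ^ 2 < a j}

def closedPolydisk (a : J → ℝ) : Set (J → ℂ) := {z | ∀ j, ‖z j‖ ^ 2 ≤ a j}

theorem polydisk_eq_univ_pi_ball (a : J → ℝ) :
    polydisk a = univ.pi fun j => ball (0 : ℂ) √(a j) := by
  ext z
  simp only [polydisk, mem_ofPred_eq, mem_univ_pi, mem_ball_zero_iff,
    Real.lt_sqrt (norm_nonneg _)]

theorem closedPolydisk_eq_univ_pi_closedBall {a : J → ℝ} (ha : ∀ j, 0 ≤ a j) :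
    closedPolydisk a = univ.pi fun j => closedBall (0 : ℂ) √(a j) := by
  ext z
  simp only [closedPolydisk, mem_ofPred_eq, mem_univ_pi, mem_closedBall_zero_iff,
    Real.le_sqrt (norm_nonneg _) (ha _)]

theorem isOpen_polydisk [Finite J] (a : J → ℝ) : IsOpen (polydisk a) := by
  rw [polydisk_eq_univ_pi_ball]
  exact isOpen_set_pi finite_univ fun j _ => isOpen_ball

theorem isCompact_closedPolydisk {a : J → ℝ} (ha : ∀ j, 0 ≤ a j) :
    IsCompact (closedPolydisk a) := by
  rw [closedPolydisk_eq_univ_pi_closedBall ha]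
  exact isCompact_univ_pi fun j => isCompact_closedBall _ _

theorem isConnected_polydisk {a : J → ℝ} (ha : ∀ j, 0 < a j) : IsConnected (polydisk a) := by
  refine ⟨⟨0, fun j => by simpa using ha j⟩, ?_⟩
  rw [polydisk_eq_univ_pi_ball]
  exact (convex_pi fun j _ => convex_ball _ _).isPreconnected

theorem polydisk_subset_closedPolydisk (a : J → ℝ) : polydisk a ⊆ closedPolydisk a :=
  fun _ hz j => (hz j).le

theorem closedPolydisk_subset_polydisk {a a' : J → ℝ} (h : ∀ j, a' j < a j) :
    closedPolydisk a' ⊆ polydisk a :=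
  fun _ hz j => (hz j).trans_lt (h j)

theorem isPreconnected_polydisk_sdiff {a a' : J → ℝ} (ha' : ∀ j, 0 < a' j)
    (h : ∀ j, a' j < a j) : IsPreconnected (polydisk a \ polydisk a') := by
  rw [polydisk_eq_univ_pi_ball, polydisk_eq_univ_pi_ball]
  exact isPreconnected_univ_pi_ball_sdiff (by simp) (fun j => Real.sqrt_pos.2 (ha' j))
    fun j => Real.sqrt_lt_sqrt (ha' j).le (h j)

theorem polydisk_sdiff_nonempty [Nonempty J] {a a' : J → ℝ} (ha' : ∀ j, 0 ≤ a' j)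
    (h : ∀ j, a' j < a j) : (polydisk a \ polydisk a').Nonempty := by
  have hsq : ∀ j, ‖((√(a' j) : ℝ) : ℂ)‖ ^ 2 = a' j := fun j => by
    rw [Complex.norm_real, Real.norm_of_nonneg (Real.sqrt_nonneg _), Real.sq_sqrt (ha' j)]
  refine ⟨fun j => (√(a' j) : ℂ), fun j => (hsq j).trans_lt (h j), fun hz => ?_⟩
  obtain ⟨j⟩ := ‹Nonempty J›
  exact (hz j).ne (hsq j)

end Polydisk

theorem Topology.IsOpenEmbedding.isOpen_image_of_subset {α X : Type*} [TopologicalSpace α]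
    [TopologicalSpace X] {f : α → X} {s t : Set α} (hf : IsOpenEmbedding (s.domRestrict f))
    (ht : IsOpen t) (hts : t ⊆ s) : IsOpen (f '' t) := by
  rw [← inter_eq_left.2 hts, ← image_domRestrict]
  exact hf.isOpenMap _ (ht.preimage continuous_subtype_val)

theorem stmt_9_general {n : ℕ} (hn : 0 < n)
    {X : Type*} [TopologicalSpace X] [T2Space X] [ConnectedSpace X]
    (a a' : Fin n → ℝ) (ha' : ∀ j, 0 < a' j) (haa' : ∀ j, a' j < a j)
    (ι : (Fin n → ℂ) → X)
    (hι : IsOpenEmbedding fun z : {z : Fin n → ℂ | ∀ j, ‖z j‖ ^ 2 < a j} =>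
      ι z) :
    IsConnected (ι '' {z : Fin n → ℂ | ∀ j, ‖z j‖ ^ 2 < a' j}) ∧
    IsConnected (ι '' {z : Fin n → ℂ | ∀ j, ‖z j‖ ^ 2 < a' j})ᶜ := by
  change IsOpenEmbedding ((polydisk a).domRestrict ι) at hι
  change IsConnected (ι '' polydisk a') ∧ IsConnected (ι '' polydisk a')ᶜ
  have hK : closedPolydisk a' ⊆ polydisk a := closedPolydisk_subset_polydisk haa'
  have hP' : polydisk a' ⊆ polydisk a := (polydisk_subset_closedPolydisk a').trans hK
  have hcont : ContinuousOn ι (polydisk a) :=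
    continuousOn_iff_continuous_domRestrict.2 hι.continuous
  set U := ι '' polydisk a' with hU
  set A := ι '' (polydisk a \ polydisk a') with hA
  have hAU : A ⊆ Uᶜ := by
    rw [hA, (injOn_iff_injective.2 hι.injective).image_sdiff_subset hP']
    exact sdiff_subset_compl _ _
  have hclosure : closure U ⊆ U ∪ A := by
    have hKc : IsClosed (ι '' closedPolydisk a') :=
      ((isCompact_closedPolydisk fun j => (ha' j).le).image_of_continuousOn
        (hcont.mono hK)).isClosed
    refine (closure_minimal (image_mono (polydisk_subset_closedPolydisk a')) hKc).trans ?_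
    rw [hU, hA, ← image_union, union_sdiff_cancel hP']
    exact image_mono hK
  have : Nonempty (Fin n) := ⟨⟨0, hn⟩⟩
  refine ⟨(isConnected_polydisk ha').image _ (hcont.mono hP'),
    ((polydisk_sdiff_nonempty (fun j => (ha' j).le) haa').image ι).mono hAU, ?_⟩
  have hUopen : IsOpen U := hι.isOpen_image_of_subset (isOpen_polydisk a') hP'
  exact hUopen.isPreconnected_compl_of_closure_subset_union
    ((isPreconnected_polydisk_sdiff ha' haa').image _ (hcont.mono sdiff_subset)) hAU hclosure

/-- Let X be a closed connected 2n-dimensional manifold, P' ⊆ P open polydisks in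
ℂ^n ≅ ℝ^{2n} with cl(P') ⊆ P, and ι an embedding of P onto an open subset of X.
Then ι(P') is solid: both ι(P') and its complement are connected. -/
theorem stmt_9 {n : ℕ} (hn : 0 < n)
    {X : Type*} [TopologicalSpace X] [CompactSpace X] [T2Space X] [ConnectedSpace X]
    [ChartedSpace (EuclideanSpace ℝ (Fin (2 * n))) X]
    (a a' : Fin n → ℝ) (ha' : ∀ j, 0 < a' j) (haa' : ∀ j, a' j < a j)
    (ι : (Fin n → ℂ) → X)
    (hι : IsOpenEmbedding fun z : {z : Fin n → ℂ | ∀ j, ‖z j‖ ^ 2 < a j} =>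
      ι z) :
    IsConnected (ι '' {z : Fin n → ℂ | ∀ j, ‖z j‖ ^ 2 < a' j}) ∧
    IsConnected (ι '' {z : Fin n → ℂ | ∀ j, ‖z j‖ ^ 2 < a' j})ᶜ :=
  stmt_9_general hn a a' ha' haa' ι hι
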